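/- Let Γ(x,t) = (4πt)^{−n/2} exp(−|x|²/(4t)) be the heat kernel in ℝⁿ and S_R the sphere of radius R > 0 centered at the origin, with surface measure ds_y. Then there exist constants c > 0 and δ > 0 such that for every x ∈ S_R and all times 0 < t₁ < t₂ with t₂ − t₁ < δ: ∫_{S_R} Γ(x−y, t₂−t₁) ds_y ≥ c/√(t₂−t₁). -/

import Mathlib

open MeasureTheory Metric Real Set Filter
open scoped Topology

noncomputable section

/-- The Laplacian of a function `f : ℝⁿ → ℝ`, as the sum of the second partial
derivatives in the coordinate directions. -/
def lap (n : ℕ) (f : EuclideanSpace ℝ (Fin n) → ℝ) (x : EuclideanSpace ℝ (Fin n)) : ℝ :=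
  ∑ i : Fin n,
    fderiv ℝ (fun y => fderiv ℝ f y (EuclideanSpace.single i 1)) x (EuclideanSpace.single i 1)

/-- The fundamental solution (heat kernel) of the heat equation on `ℝⁿ`,
extended by `0` for nonpositive times. -/
def heatKernel (n : ℕ) (x : EuclideanSpace ℝ (Fin n)) (t : ℝ) : ℝ :=
  if 0 < t then (4 * Real.pi * t) ^ (-(n : ℝ) / 2) * Real.exp (-‖x‖ ^ 2 / (4 * t)) else 0

/-!
The kernel `Γ(x - y, t)` is at least `(4πt)^(-n/2) e^(-1/4)` for `y` in the cap
`S_R ∩ closedBall x √t`. The orthogonal projection onto `x^⊥` is `1`-Lipschitz and the image of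
this cap contains an `(n-1)`-ball of radius `√t / 2`, so the cap has `μH[n-1]`-measure at least a constant times
`t^((n-1)/2)`; the product is a constant times `t^(-1/2)`. The integral is not a junk value because
`S_R` is compact and locally a Lipschitz graph over its tangent hyperplanes, hence of finite
`μH[n-1]`-measure.
-/

open scoped RealInnerProductSpace ENNReal
open Module (finrank)

section HeatKernel

variable {n : ℕ}

lemma heatKernel_nonneg (z : EuclideanSpace ℝ (Fin n)) (t : ℝ) : 0 ≤ heatKernel n z t := by
  unfold heatKernel
  split_ifs
  · positivity
  · rfl

lemma heatKernel_le_heatKernel_zero (z : EuclideanSpace ℝ (Fin n)) (t : ℝ) :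
    heatKernel n z t ≤ heatKernel n 0 t := by
  unfold heatKernel
  split_ifs with ht
  · gcongr
    simp
  · rfl

lemma heatKernel_zero_mul_exp_le {z : EuclideanSpace ℝ (Fin n)} {t : ℝ} (hz : ‖z‖ ≤ √t) :
    heatKernel n 0 t * exp (-1 / 4) ≤ heatKernel n z t := by
  unfold heatKernel
  split_ifs with ht
  · have hzt : ‖z‖ ^ 2 ≤ t := (Real.le_sqrt (norm_nonneg z) ht.le).1 hz
    have h : ‖z‖ ^ 2 / (4 * t) ≤ 1 / 4 := by
      rw [div_le_iff₀ (by positivity)]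
      linarith
    rw [mul_assoc, ← Real.exp_add]
    gcongr
    rw [norm_zero, zero_pow two_ne_zero, neg_zero, zero_div, zero_add, neg_div, neg_div]
    linarith
  · rw [zero_mul]

lemma continuous_heatKernel (t : ℝ) :
    Continuous fun z : EuclideanSpace ℝ (Fin n) => heatKernel n z t := by
  unfold heatKernel
  split_ifs
  · fun_prop
  · exact continuous_const

variable {μ : Measure (EuclideanSpace ℝ (Fin n))} {s : Set (EuclideanSpace ℝ (Fin n))}

lemma integrableOn_heatKernel_sub (hs : μ s ≠ ∞) (x : EuclideanSpace ℝ (Fin n)) (t : ℝ) :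
    IntegrableOn (fun y => heatKernel n (x - y) t) s μ :=
  Measure.integrableOn_of_bounded hs
    ((continuous_heatKernel t).comp (continuous_const.sub continuous_id)).aestronglyMeasurable
    (ae_of_all _ fun y => by
      rw [Real.norm_of_nonneg (heatKernel_nonneg _ _)]
      exact heatKernel_le_heatKernel_zero _ _)

lemma heatKernel_zero_mul_measureReal_le_setIntegral (hs : MeasurableSet s) (hμs : μ s ≠ ∞)
    (x : EuclideanSpace ℝ (Fin n)) (t : ℝ) :
    heatKernel n 0 t * exp (-1 / 4) * μ.real (s ∩ closedBall x √t) ≤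
      ∫ y in s, heatKernel n (x - y) t ∂μ :=
  calc _ ≤ ∫ y in s ∩ closedBall x √t, heatKernel n (x - y) t ∂μ :=
        setIntegral_ge_of_const_le_real (hs.inter measurableSet_closedBall)
          (measure_ne_top_of_subset inter_subset_left hμs)
          (fun y hy => heatKernel_zero_mul_exp_le (by rw [← dist_eq_norm, dist_comm]; exact hy.2))
          (integrableOn_heatKernel_sub (measure_ne_top_of_subset inter_subset_left hμs) x t)
    _ ≤ _ := setIntegral_mono_set (integrableOn_heatKernel_sub hμs x t)
        (ae_of_all _ fun y => heatKernel_nonneg _ _) inter_subset_left.eventuallyLE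

lemma heatKernel_zero_mul_sqrt_pow {m : ℕ} {t : ℝ} (ht : 0 < t) :
    heatKernel (m + 1) 0 t * √t ^ m = (4 * π) ^ (-((m + 1 : ℕ) : ℝ) / 2) / √t := by
  rw [eq_div_iff (sqrt_pos.2 ht).ne', heatKernel, if_pos ht, norm_zero,
    zero_pow two_ne_zero, neg_zero, zero_div, exp_zero, mul_one, mul_rpow (by positivity) ht.le,
    sqrt_eq_rpow, ← rpow_natCast, ← rpow_mul ht.le, mul_assoc, mul_assoc, ← rpow_add ht,
    ← rpow_add ht]
  convert mul_one _ using 2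
  convert rpow_zero t using 2
  push_cast
  ring

end HeatKernel

section SphereLift

variable {E : Type*} [NormedAddCommGroup E] [InnerProductSpace ℝ E] {x : E}

/-- The point of the sphere of radius `‖x‖` lying over `w ∈ x^⊥` on the side of `x`; on that
hemisphere it inverts the orthogonal projection onto `x^⊥`. -/
def sphereLift (x : E) (w : (ℝ ∙ x)ᗮ) : E :=
  (w : E) + (√(‖x‖ ^ 2 - ‖w‖ ^ 2) / ‖x‖) • x

lemma norm_sq_add_smul_of_mem_orthogonal (w : (ℝ ∙ x)ᗮ) (c : ℝ) :
    ‖(w : E) + c • x‖ ^ 2 = ‖w‖ ^ 2 + c ^ 2 * ‖x‖ ^ 2 := by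
  have h : ⟪(w : E), c • x⟫ = 0 := by
    rw [real_inner_smul_right, real_inner_comm,
      Submodule.mem_orthogonal_singleton_iff_inner_right.1 w.2, mul_zero]
  rw [norm_add_sq_real, h, norm_smul, mul_pow, Real.norm_eq_abs, sq_abs, Submodule.coe_norm]
  ring

lemma norm_sphereLift {w : (ℝ ∙ x)ᗮ} (hw : ‖w‖ ≤ ‖x‖) : ‖sphereLift x w‖ = ‖x‖ := by
  rcases eq_or_ne x 0 with rfl | hx
  · simp_all [sphereLift]
  have hx' : 0 < ‖x‖ := norm_pos_iff.2 hx
  rw [← sq_eq_sq₀ (norm_nonneg _) hx'.le, sphereLift, norm_sq_add_smul_of_mem_orthogonal, div_pow,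
    sq_sqrt (by nlinarith [norm_nonneg w]), div_mul_cancel₀ _ (by positivity)]
  ring

lemma dist_sphereLift_le {w : (ℝ ∙ x)ᗮ} (hw : ‖w‖ ≤ ‖x‖) : dist (sphereLift x w) x ≤ 2 * ‖w‖ := by
  rcases eq_or_ne x 0 with rfl | hx
  · simp_all [sphereLift]
  have hx' : 0 < ‖x‖ := norm_pos_iff.2 hx
  set b := √(‖x‖ ^ 2 - ‖w‖ ^ 2)
  have hb : b ^ 2 = ‖x‖ ^ 2 - ‖w‖ ^ 2 := sq_sqrt (by nlinarith [norm_nonneg w])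
  have hbx : b ≤ ‖x‖ := by nlinarith [sqrt_nonneg (‖x‖ ^ 2 - ‖w‖ ^ 2), norm_nonneg w]
  -- `‖x‖ ≤ ‖w‖ + b` because `‖x‖² = ‖w‖² + b²`
  have hxwb : ‖x‖ - b ≤ ‖w‖ := by nlinarith [sqrt_nonneg (‖x‖ ^ 2 - ‖w‖ ^ 2), norm_nonneg w]
  calc dist (sphereLift x w) x = ‖(w : E) + (b / ‖x‖ - 1) • x‖ := by
        rw [dist_eq_norm, sphereLift, sub_smul, one_smul, add_sub_assoc]
    _ ≤ ‖w‖ + |b / ‖x‖ - 1| * ‖x‖ := by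
        rw [← Real.norm_eq_abs, ← norm_smul]; exact norm_add_le _ _
    _ = ‖w‖ + (‖x‖ - b) := by
        rw [abs_of_nonpos (by rw [sub_nonpos, div_le_one hx']; exact hbx)]
        field_simp
        ring
    _ ≤ 2 * ‖w‖ := by linarith

lemma orthogonalProjectionOnto_sphereLift (w : (ℝ ∙ x)ᗮ) :
    (ℝ ∙ x)ᗮ.orthogonalProjectionOnto (sphereLift x w) = w := by
  rw [sphereLift, map_add, map_smul, Submodule.orthogonalProjectionOnto_mem_subspace_eq_self,
    Submodule.orthogonalProjectionOnto_orthogonalComplement_singleton_eq_zero, smul_zero,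
    add_zero]

lemma sphereLift_orthogonalProjectionOnto {y : E} (hy : ‖y‖ = ‖x‖) (hxy : 0 ≤ ⟪x, y⟫) :
    sphereLift x ((ℝ ∙ x)ᗮ.orthogonalProjectionOnto y) = y := by
  rcases eq_or_ne x 0 with rfl | hx
  · simp_all [sphereLift]
  have hx' : 0 < ‖x‖ := norm_pos_iff.2 hx
  set c := ⟪x, y⟫ / ‖x‖ ^ 2
  set w := (ℝ ∙ x)ᗮ.orthogonalProjectionOnto y with hw_def
  have hy_eq : (w : E) + c • x = y := by
    rw [hw_def, Submodule.orthogonalProjectionOnto_orthogonal, Submodule.coe_mk,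
      Submodule.starProjection_singleton]
    exact sub_add_cancel y _
  have hw : ‖x‖ ^ 2 - ‖w‖ ^ 2 = (c * ‖x‖) ^ 2 := by
    have h := norm_sq_add_smul_of_mem_orthogonal w c
    rw [hy_eq, hy] at h
    linear_combination h
  have hc : 0 ≤ c := by positivity
  rw [sphereLift, hw, sqrt_sq (by positivity), mul_div_cancel_right₀ _ hx'.ne', hy_eq]

lemma closedBall_subset_image_orthogonalProjectionOnto {r : ℝ} (hr : r ≤ 2 * ‖x‖) :
    closedBall (0 : (ℝ ∙ x)ᗮ) (r / 2) ⊆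
      (ℝ ∙ x)ᗮ.orthogonalProjectionOnto '' (sphere 0 ‖x‖ ∩ closedBall x r) := by
  intro w hw
  rw [mem_closedBall_zero_iff] at hw
  have hwx : ‖w‖ ≤ ‖x‖ := by linarith
  refine ⟨sphereLift x w, ⟨?_, ?_⟩, orthogonalProjectionOnto_sphereLift w⟩
  · rw [mem_sphere_zero_iff_norm, norm_sphereLift hwx]
  · rw [mem_closedBall]
    linarith [dist_sphereLift_le hwx]

lemma sphere_inter_ball_subset_image_sphereLift {ε : ℝ} (hε : ε ≤ ‖x‖) :
    sphere 0 ‖x‖ ∩ ball x ε ⊆ sphereLift x '' ball 0 ε := by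
  rintro y ⟨hy, hyx⟩
  rw [mem_sphere_zero_iff_norm] at hy
  rw [mem_ball, dist_eq_norm] at hyx
  refine ⟨(ℝ ∙ x)ᗮ.orthogonalProjectionOnto y, ?_, sphereLift_orthogonalProjectionOnto hy ?_⟩
  · rw [mem_ball_zero_iff, ← sub_zero ((ℝ ∙ x)ᗮ.orthogonalProjectionOnto y),
      ← Submodule.orthogonalProjectionOnto_orthogonalComplement_singleton_eq_zero x, ← map_sub]
    exact (Submodule.norm_orthogonalProjectionOnto_apply_le _ _).trans_lt hyx
  · -- `‖y - x‖ < ‖x‖` forces `⟪x, y⟫ > ‖x‖² / 2`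
    have h := norm_sub_sq_real y x
    rw [hy, real_inner_comm] at h
    nlinarith [norm_nonneg (y - x)]

lemma contDiffAt_sphereLift (hx : x ≠ 0) : ContDiffAt ℝ 1 (sphereLift x) 0 := by
  have hx' : ‖x‖ ^ 2 - ‖(0 : (ℝ ∙ x)ᗮ)‖ ^ 2 ≠ 0 := by simpa using hx
  have hsqrt : ContDiffAt ℝ 1 (fun w : (ℝ ∙ x)ᗮ => √(‖x‖ ^ 2 - ‖w‖ ^ 2)) 0 :=
    (contDiffAt_const.sub (contDiff_norm_sq ℝ).contDiffAt).sqrt hx'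
  exact (ℝ ∙ x)ᗮ.subtypeL.contDiff.contDiffAt.add ((hsqrt.div_const _).smul contDiffAt_const)

end SphereLift

section HausdorffMeasure

variable {E : Type*} [NormedAddCommGroup E] [InnerProductSpace ℝ E] [FiniteDimensional ℝ E]
  [MeasurableSpace E] [BorelSpace E] {m : ℕ}

lemma hausdorffMeasure_closedBall_of_finrank_eq (hE : finrank ℝ E = m) {ρ : ℝ} (hρ : 0 ≤ ρ) :
    μH[m] (closedBall (0 : E) ρ) =
      ENNReal.ofReal (ρ ^ m) * μH[m] (closedBall (0 : EuclideanSpace ℝ (Fin m)) 1) := by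
  let e := ((stdOrthonormalBasis ℝ E).reindex (finCongr hE)).repr
  rw [← e.toIsometryEquiv.hausdorffMeasure_image, e.toIsometryEquiv.image_closedBall,
    LinearIsometryEquiv.coe_toIsometryEquiv, map_zero, Measure.addHaar_closedBall' _ _ hρ,
    finrank_euclideanSpace_fin]

lemma hausdorffMeasure_sphere_lt_top (hE : finrank ℝ E = m + 1) (R : ℝ) :
    μH[m] (sphere (0 : E) R) < ∞ := by
  rcases le_or_gt R 0 with hR | hR
  · exact (Measure.hausdorffMeasure_le_one_of_subsingleton (subsingleton_sphere 0 hR)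
      m.cast_nonneg).trans_lt ENNReal.one_lt_top
  have : Fact (finrank ℝ E = m + 1) := ⟨hE⟩
  refine (isCompact_sphere 0 R).measure_lt_top_of_nhdsWithin fun x hx => ?_
  have hx0 : x ≠ 0 := ne_zero_of_mem_sphere hR.ne' ⟨x, hx⟩
  rw [mem_sphere_zero_iff_norm] at hx
  obtain ⟨K, t, ht, hlip⟩ := (contDiffAt_sphereLift hx0).exists_lipschitzOnWith
  obtain ⟨ε, hε, hεt⟩ := Metric.mem_nhds_iff.1 ht
  set δ := min ε ‖x‖
  have hδ : 0 < δ := lt_min hε (norm_pos_iff.2 hx0)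
  refine ⟨sphere 0 R ∩ ball x δ, inter_mem_nhdsWithin _ (ball_mem_nhds x hδ), ?_⟩
  calc μH[m] (sphere 0 R ∩ ball x δ) ≤ μH[m] (sphereLift x '' ball 0 δ) := by
        rw [← hx]; exact measure_mono (sphere_inter_ball_subset_image_sphereLift (min_le_right _ _))
    _ ≤ K ^ (m : ℝ) * μH[m] (ball (0 : (ℝ ∙ x)ᗮ) δ) :=
        (hlip.mono ((ball_subset_ball (min_le_left _ _)).trans hεt)).hausdorffMeasure_image_le
          m.cast_nonneg
    _ ≤ K ^ (m : ℝ) * μH[m] (closedBall (0 : (ℝ ∙ x)ᗮ) δ) := by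
        gcongr; exact ball_subset_closedBall
    _ < ∞ := by
        rw [hausdorffMeasure_closedBall_of_finrank_eq
          (Submodule.finrank_orthogonal_span_singleton hx0) hδ.le]
        exact ENNReal.mul_lt_top (by simp)
          (ENNReal.mul_lt_top ENNReal.ofReal_lt_top measure_closedBall_lt_top)

lemma le_hausdorffMeasure_sphere_inter_closedBall (hE : finrank ℝ E = m + 1) {x : E} (hx : x ≠ 0)
    {r : ℝ} (hr₀ : 0 ≤ r) (hr : r ≤ 2 * ‖x‖) :
    ENNReal.ofReal ((r / 2) ^ m) * μH[m] (closedBall (0 : EuclideanSpace ℝ (Fin m)) 1) ≤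
      μH[m] (sphere 0 ‖x‖ ∩ closedBall x r) := by
  have : Fact (finrank ℝ E = m + 1) := ⟨hE⟩
  rw [← hausdorffMeasure_closedBall_of_finrank_eq
    (Submodule.finrank_orthogonal_span_singleton hx) (by positivity)]
  exact (measure_mono (closedBall_subset_image_orthogonalProjectionOnto hr)).trans
    (hausdorffMeasure_orthogonalProjectionOnto_le _ _ _ m.cast_nonneg)

end HausdorffMeasure

/-- There are constants `c > 0` and `δ > 0` such that for every
`x ∈ S_R` and all times `0 < t₁ < t₂` with `t₂ - t₁ < δ`, the surface integral of the
heat kernel satisfies `∫_{S_R} Γ(x-y, t₂-t₁) ds_y ≥ c / √(t₂-t₁)`. -/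
theorem heatKernel_sphere_integral_lower_bound
    (n : ℕ) (hn : 0 < n) (R : ℝ) (hR : 0 < R) :
    ∃ c > 0, ∃ δ > 0, ∀ x ∈ sphere (0 : EuclideanSpace ℝ (Fin n)) R,
      ∀ t₁ t₂ : ℝ, 0 < t₁ → t₁ < t₂ → t₂ - t₁ < δ →
      c / Real.sqrt (t₂ - t₁) ≤
        ∫ y in sphere (0 : EuclideanSpace ℝ (Fin n)) R,
          heatKernel n (x - y) (t₂ - t₁) ∂μH[(n : ℝ) - 1] := by
  obtain ⟨m, rfl⟩ := Nat.exists_eq_add_one_of_ne_zero hn.ne'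
  set β := μH[(m : ℝ)] (closedBall (0 : EuclideanSpace ℝ (Fin m)) 1)
  have hβ : 0 < β.toReal :=
    ENNReal.toReal_pos (measure_closedBall_pos _ _ one_pos).ne' measure_closedBall_lt_top.ne
  refine ⟨(4 * π) ^ (-((m + 1 : ℕ) : ℝ) / 2) * exp (-1 / 4) * (β.toReal / 2 ^ m), by positivity,
    (2 * R) ^ 2, by positivity, fun x hx t₁ t₂ _ h₁₂ hδ => ?_⟩
  set t := t₂ - t₁
  have ht : 0 < t := sub_pos.2 h₁₂
  have hxR : ‖x‖ = R := mem_sphere_zero_iff_norm.1 hx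
  have hS : μH[(m : ℝ)] (sphere (0 : EuclideanSpace ℝ (Fin (m + 1))) R) ≠ ∞ :=
    (hausdorffMeasure_sphere_lt_top finrank_euclideanSpace_fin R).ne
  have hcap : (√t / 2) ^ m * β.toReal ≤ μH[(m : ℝ)].real (sphere 0 R ∩ closedBall x √t) := by
    have hr : √t ≤ 2 * ‖x‖ := by
      rw [hxR]; exact (sqrt_le_sqrt hδ.le).trans_eq (sqrt_sq (by positivity))
    have h := le_hausdorffMeasure_sphere_inter_closedBall finrank_euclideanSpace_fin
      (ne_zero_of_mem_sphere hR.ne' ⟨x, hx⟩) (sqrt_nonneg t) hr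
    rw [hxR] at h
    have := ENNReal.toReal_mono (measure_ne_top_of_subset inter_subset_left hS) h
    rwa [ENNReal.toReal_mul, ENNReal.toReal_ofReal (by positivity)] at this
  have hdim : ((m + 1 : ℕ) : ℝ) - 1 = m := by push_cast; ring
  rw [hdim]
  calc _ = heatKernel (m + 1) 0 t * exp (-1 / 4) * ((√t / 2) ^ m * β.toReal) := by
        rw [div_pow]
        linear_combination (-(exp (-1 / 4) * β.toReal / 2 ^ m)) * heatKernel_zero_mul_sqrt_pow ht
    _ ≤ heatKernel (m + 1) 0 t * exp (-1 / 4) *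
          μH[(m : ℝ)].real (sphere 0 R ∩ closedBall x √t) :=
        mul_le_mul_of_nonneg_left hcap (mul_nonneg (heatKernel_nonneg _ _) (exp_pos _).le)
    _ ≤ _ := heatKernel_zero_mul_measureReal_le_setIntegral isClosed_sphere.measurableSet hS x t
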